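/- Let ζ ∈ k be a primitive n-th root of unity and let t be a positive divisor of n with t < n (so that n ∤ t). Then there exists an H_n(ζ,1,t)-module-algebra structure (σ, δ) on A = k[u]/(u^n − 1) with σ(u) = ζ·u and δ ≠ 0 if and only if t = 1. (Equivalently: for the coradically graded generalized Taft algebra T(n, N, 0) = H_n(ζ, 1, n/N), such structures exist if and only if N = n, i.e., if and only if T(n,N,0) is a Taft algebra.) -/

import Mathlib

/-!
Since `σ` acts on the basis `uⁱ` with the distinct eigenvalues `ζⁱ`, the relation
`σ(δu) = ζ^(t+1) δu` forces `δu = c u^(t+1)`, and the twisted Leibniz rule then gives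
`δ(uⁱ) = c [i]_ζ u^(i+t)` with `[i]_ζ = 1 + ζ + ⋯ + ζ^(i-1)`. Hence
`δ^N u = c^N ∏_{l<N} [1 + lt]_ζ u`, and `δ^N = 0 ≠ δ` forces `[1 + lt]_ζ = 0`, i.e. `n ∣ 1 + lt`,
for some `l`; as `t ∣ n`, this gives `t = 1`. Conversely, for `t = 1` the inner twisted derivation
`δ = u(σ - 1)` works: `δ(uⁱ) = (ζ - 1)[i]_ζ u^(i+1)`, so `δⁿ` kills every `uⁱ`.
-/

/-- An `H_n(ζ,m,t)`-module-algebra structure on `A`, given by the action `σ` of the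
grouplike generator `y` and the action `δ` of the `(y^m,1)`-skew primitive `x`;
here `N = n / gcd(n, mt)` is the nilpotency order of `x`. -/
def IsHAction {k A : Type*} [Field k] [CommRing A] [Algebra k A]
    (n m t N : ℕ) (ζ : k) (σ : A ≃ₐ[k] A) (δ : A →ₗ[k] A) : Prop :=
  σ ^ n = 1 ∧ δ 1 = 0 ∧
  (∀ a c : A, δ (a * c) = (σ ^ m) a * δ c + δ a * c) ∧
  δ ^ N = 0 ∧
  σ.toLinearMap ∘ₗ δ = ζ ^ t • (δ ∘ₗ σ.toLinearMap)

open Finset Polynomial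

section TwistedDerivation

variable {k A : Type*} [CommSemiring k] [CommSemiring A] [Algebra k A]

theorem twistedDerivation_apply_pow {σ : A → A} {δ : A →ₗ[k] A} {u : A} {ζ c : k} {s : ℕ}
    (hδ1 : δ 1 = 0) (hder : ∀ a b, δ (a * b) = σ a * δ b + δ a * b)
    (hσ : σ u = ζ • u) (hδ : δ u = c • u ^ (s + 1)) (i : ℕ) :
    δ (u ^ i) = (c * ∑ j ∈ range i, ζ ^ j) • u ^ (i + s) := by
  induction i with
  | zero => simp [hδ1]
  | succ i ih =>
    rw [pow_succ', hder, hσ, ih, hδ, geom_sum_succ]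
    simp only [Algebra.smul_def, map_mul, map_add, map_one]
    ring

theorem pow_apply_pow_of_apply_pow {δ : A →ₗ[k] A} {u : A} {c : k} {q : ℕ → k} {s : ℕ}
    (hδ : ∀ i, δ (u ^ i) = (c * q i) • u ^ (i + s)) (j i : ℕ) :
    (δ ^ j) (u ^ i) = (c ^ j * ∏ l ∈ range j, q (i + l * s)) • u ^ (i + j * s) := by
  induction j with
  | zero => simp
  | succ j ih =>
    rw [pow_succ', Module.End.mul_apply, ih, map_smul, hδ, smul_smul, prod_range_succ,
      show i + j * s + s = i + (j + 1) * s by ring]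
    congr 1
    ring

end TwistedDerivation

section InnerTwistedDerivation

variable {k A : Type*} [CommRing k] [CommRing A] [Algebra k A]

def innerTwistedDerivation (σ : A →ₐ[k] A) (a : A) : A →ₗ[k] A :=
  LinearMap.mulLeft k a ∘ₗ (σ.toLinearMap - LinearMap.id)

variable (σ : A →ₐ[k] A) (a : A)

@[simp]
theorem innerTwistedDerivation_apply (x : A) :
    innerTwistedDerivation σ a x = a * (σ x - x) := rfl

theorem innerTwistedDerivation_one : innerTwistedDerivation σ a 1 = 0 := by
  simp

theorem innerTwistedDerivation_mul (x y : A) :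
    innerTwistedDerivation σ a (x * y) =
      σ x * innerTwistedDerivation σ a y + innerTwistedDerivation σ a x * y := by
  simp only [innerTwistedDerivation_apply, map_mul]
  ring

theorem innerTwistedDerivation_apply_self {ζ : k} (h : σ a = ζ • a) :
    innerTwistedDerivation σ a a = (ζ - 1) • a ^ (1 + 1) := by
  simp only [innerTwistedDerivation_apply, h, Algebra.smul_def, map_sub, map_one]
  ring

theorem comp_innerTwistedDerivation {ζ : k} (h : σ a = ζ • a) :
    σ.toLinearMap ∘ₗ innerTwistedDerivation σ a =
      ζ • (innerTwistedDerivation σ a ∘ₗ σ.toLinearMap) := by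
  ext x
  simp [h]

end InnerTwistedDerivation

theorem geom_sum_eq_zero_iff_dvd {k : Type*} [Field k] {ζ : k} {n : ℕ}
    (hζ : IsPrimitiveRoot ζ n) (hζ1 : ζ ≠ 1) (m : ℕ) :
    ∑ j ∈ range m, ζ ^ j = 0 ↔ n ∣ m := by
  rw [← hζ.pow_eq_one_iff_dvd, ← sub_eq_zero (a := ζ ^ m), ← geom_sum_mul,
    mul_eq_zero, or_iff_left (sub_ne_zero.mpr hζ1)]

theorem AlgEquiv.pow_apply_of_apply_eq_smul {k A : Type*} [CommSemiring k] [Semiring A]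
    [Algebra k A] {σ : A ≃ₐ[k] A} {x : A} {ζ : k} (h : σ x = ζ • x) (j : ℕ) :
    (σ ^ j) x = ζ ^ j • x := by
  induction j with
  | zero => simp
  | succ j ih => rw [pow_succ', AlgEquiv.mul_apply, ih, map_smul, h, smul_smul, pow_succ]

namespace PowerBasis

variable {k A : Type*} [Field k] [CommRing A] [Algebra k A] [Nontrivial A]
  (pb : PowerBasis k A) (hu : pb.gen ^ pb.dim = 1)
include hu

theorem basis_mod_dim (i : ℕ) :
    pb.basis ⟨i % pb.dim, Nat.mod_lt _ pb.dim_pos⟩ = pb.gen ^ i := by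
  rw [pb.basis_eq_pow, ← pow_eq_pow_mod i hu]

theorem gen_pow_ne_zero (i : ℕ) : pb.gen ^ i ≠ 0 :=
  pb.basis_mod_dim hu i ▸ pb.basis.ne_zero _

theorem minpoly_gen_eq : minpoly k pb.gen = X ^ pb.dim - 1 := by
  refine (eq_of_monic_of_dvd_of_natDegree_le (minpoly.monic pb.isIntegral_gen)
    ?_ (minpoly.dvd k _ ?_) ?_).symm
  · simpa using monic_X_pow_sub_C (1 : k) pb.dim_ne_zero
  · simp [hu]
  · rw [pb.natDegree_minpoly, ← C_1, natDegree_X_pow_sub_C]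

theorem aeval_smul_gen_minpoly {ζ : k} (hζ : ζ ^ pb.dim = 1) :
    aeval (ζ • pb.gen) (minpoly k pb.gen) = 0 := by
  simp [pb.minpoly_gen_eq hu, _root_.smul_pow, hζ, hu]

noncomputable def scaleGen (ζ : k) (hζ : ζ ^ pb.dim = 1) : A ≃ₐ[k] A :=
  have hζ' : ζ⁻¹ ^ pb.dim = 1 := by rw [inv_pow, hζ, inv_one]
  have hζ0 : ζ ≠ 0 := by rintro rfl; rw [zero_pow pb.dim_ne_zero] at hζ; exact zero_ne_one hζ
  AlgEquiv.ofAlgHom (pb.lift _ (pb.aeval_smul_gen_minpoly hu hζ))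
    (pb.lift _ (pb.aeval_smul_gen_minpoly hu hζ'))
    (pb.algHom_ext (by simp [smul_smul, hζ0]))
    (pb.algHom_ext (by simp [smul_smul, hζ0]))

theorem scaleGen_gen {ζ : k} (hζ : ζ ^ pb.dim = 1) : pb.scaleGen hu ζ hζ pb.gen = ζ • pb.gen :=
  pb.lift_gen _ (pb.aeval_smul_gen_minpoly hu hζ)

theorem scaleGen_pow_dim {ζ : k} (hζ : ζ ^ pb.dim = 1) : pb.scaleGen hu ζ hζ ^ pb.dim = 1 :=
  AlgEquiv.coe_toAlgHom_injective <| pb.algHom_ext <| by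
    simp [AlgEquiv.pow_apply_of_apply_eq_smul (pb.scaleGen_gen hu hζ), hζ]

theorem exists_eq_smul_gen_pow {ζ : k} (hζ : IsPrimitiveRoot ζ pb.dim) {σ : A →ₐ[k] A}
    (hσ : σ pb.gen = ζ • pb.gen) {x : A} {m : ℕ} (hx : σ x = ζ ^ m • x) :
    ∃ c : k, x = c • pb.gen ^ m := by
  set i₀ : Fin pb.dim := ⟨m % pb.dim, Nat.mod_lt _ pb.dim_pos⟩
  have hσx : σ x = ∑ j : Fin pb.dim, (ζ ^ (j : ℕ) * pb.basis.repr x j) • pb.basis j := by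
    conv_lhs => rw [← pb.basis.sum_repr x]
    simp [pb.basis_eq_pow, hσ, _root_.smul_pow, smul_smul, mul_comm]
  have hrepr (i : Fin pb.dim) :
      (ζ ^ (i : ℕ) - ζ ^ m) * pb.basis.repr x i = 0 := by
    have h := congr_arg (pb.basis.repr · i) (hσx.symm.trans hx)
    rw [pb.basis.repr_sum_self] at h
    rw [sub_mul, sub_eq_zero, h, map_smul, Finsupp.smul_apply, smul_eq_mul]
  refine ⟨pb.basis.repr x i₀, ?_⟩
  conv_lhs => rw [← pb.basis.sum_repr x]
  rw [sum_eq_single i₀ (fun i _ hi => ?_) (by simp), pb.basis_mod_dim hu]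
  have hpow : ζ ^ (i : ℕ) ≠ ζ ^ m := fun h =>
    hi (Fin.ext (hζ.pow_inj i.isLt i₀.isLt (h.trans (pow_eq_pow_mod m hζ.pow_eq_one))))
  rw [(mul_eq_zero.mp (hrepr i)).resolve_left (sub_ne_zero.mpr hpow), zero_smul]

theorem eq_one_of_isHAction {ζ : k} (hζ : IsPrimitiveRoot ζ pb.dim) {t N : ℕ}
    (hN : N * t = pb.dim) {σ : A ≃ₐ[k] A} {δ : A →ₗ[k] A}
    (hact : IsHAction pb.dim 1 t N ζ σ δ) (hσ : σ pb.gen = ζ • pb.gen) (hδ : δ ≠ 0) :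
    t = 1 := by
  obtain ⟨-, hδ1, hder, hδN, hcomm⟩ := hact
  simp only [pow_one] at hder
  rcases eq_or_ne ζ 1 with rfl | hζ1
  · rw [hζ.unique IsPrimitiveRoot.one] at hN
    exact Nat.eq_one_of_mul_eq_one_left hN
  have hδ_gen : σ (δ pb.gen) = ζ ^ (t + 1) • δ pb.gen := by
    simpa [hσ, smul_smul, pow_succ] using LinearMap.congr_fun hcomm pb.gen
  obtain ⟨c, hc⟩ := pb.exists_eq_smul_gen_pow hu hζ (σ := σ) hσ hδ_gen
  have hδ_pow := twistedDerivation_apply_pow hδ1 hder hσ hc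
  have hc0 : c ≠ 0 := by
    rintro rfl
    exact hδ (pb.basis.ext fun i => by simp [pb.basis_eq_pow, hδ_pow])
  have hδN_gen := pow_apply_pow_of_apply_pow hδ_pow N 1
  rw [hδN, pow_one, LinearMap.zero_apply, eq_comm, smul_eq_zero,
    or_iff_left (pb.gen_pow_ne_zero hu _), mul_eq_zero, or_iff_right (pow_ne_zero _ hc0),
    prod_eq_zero_iff] at hδN_gen
  obtain ⟨l, -, hl⟩ := hδN_gen
  have htl : t ∣ 1 + l * t :=
    (Dvd.intro_left N hN).trans ((geom_sum_eq_zero_iff_dvd hζ hζ1 _).mp hl)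
  exact Nat.dvd_one.mp ((Nat.dvd_add_left (dvd_mul_left t l)).mp htl)

theorem exists_isHAction {ζ : k} (hζ : IsPrimitiveRoot ζ pb.dim) (hn : 1 < pb.dim) :
    ∃ (σ : A ≃ₐ[k] A) (δ : A →ₗ[k] A),
      IsHAction pb.dim 1 1 pb.dim ζ σ δ ∧ σ pb.gen = ζ • pb.gen ∧ δ ≠ 0 := by
  set σ := pb.scaleGen hu ζ hζ.pow_eq_one
  have hσ : σ pb.gen = ζ • pb.gen := pb.scaleGen_gen hu _
  have hζ1 : ζ ≠ 1 := hζ.ne_one hn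
  set δ := innerTwistedDerivation (σ : A →ₐ[k] A) pb.gen
  have hδ_gen : δ pb.gen = (ζ - 1) • pb.gen ^ (1 + 1) :=
    innerTwistedDerivation_apply_self _ _ hσ
  have hδ_pow := twistedDerivation_apply_pow (innerTwistedDerivation_one _ _)
    (innerTwistedDerivation_mul _ _) hσ hδ_gen
  refine ⟨σ, δ, ⟨pb.scaleGen_pow_dim hu _, innerTwistedDerivation_one _ _,
    fun x y => by rw [pow_one]; exact innerTwistedDerivation_mul _ _ x y, ?_,
    by simpa using comp_innerTwistedDerivation (σ : A →ₐ[k] A) pb.gen hσ⟩, hσ, ?_⟩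
  · refine pb.basis.ext fun i => ?_
    rw [pb.basis_eq_pow, pow_apply_pow_of_apply_pow hδ_pow, LinearMap.zero_apply,
      prod_eq_zero (i := (pb.dim - i) % pb.dim) (mem_range.mpr (Nat.mod_lt _ pb.dim_pos)),
      mul_zero, zero_smul]
    rw [geom_sum_eq_zero_iff_dvd hζ hζ1, mul_one, Nat.dvd_iff_mod_eq_zero, Nat.add_mod_mod,
      Nat.add_sub_cancel' i.isLt.le, Nat.mod_self]
  · intro h
    rw [h, LinearMap.zero_apply, eq_comm] at hδ_gen
    exact smul_ne_zero (sub_ne_zero.mpr hζ1) (pb.gen_pow_ne_zero hu _) hδ_gen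

end PowerBasis

theorem stmt_12 (k : Type*) [Field k]
    (n : ℕ) (ζ : k) (hζ : IsPrimitiveRoot ζ n)
    (t : ℕ) (htn : t ∣ n) (htlt : t < n)
    (A : Type*) [CommRing A] [Algebra k A]
    (u : A) (b : Module.Basis (Fin n) k A) (hb : ∀ i : Fin n, b i = u ^ (i : ℕ))
    (hu : u ^ n = 1) :
    (∃ (σ : A ≃ₐ[k] A) (δ : A →ₗ[k] A),
        IsHAction n 1 t (n / Nat.gcd n (1 * t)) ζ σ δ ∧ σ u = ζ • u ∧ δ ≠ 0)
      ↔ t = 1 := by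
  have : Nontrivial A := nontrivial_of_ne _ _ (b.ne_zero ⟨0, by omega⟩)
  let pb : PowerBasis k A := ⟨u, n, b, hb⟩
  constructor
  · rintro ⟨σ, δ, hact, hσ, hδ⟩
    have hN : n / Nat.gcd n (1 * t) * t = n := by
      rw [one_mul, Nat.gcd_eq_right htn, Nat.div_mul_cancel htn]
    exact pb.eq_one_of_isHAction hu hζ hN hact hσ hδ
  · rintro rfl
    simpa using pb.exists_isHAction hu hζ htlt
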